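/- Over the λ-free language L⁻ (built from Var, ⊤, ⊥, ¬, ∨, ∧ but without the constant λ), the set of ST-valid inferences equals the relative product of the LP-valid inferences and the K3-valid inferences: 𝕊𝕋⁺ = 𝕃ℙ⁺ | 𝕂₃⁺. That is, an inference Γ ⇒ Δ of λ-free formulas is ST-valid if and only if there exists a λ-free formula φ such that Γ ⇒ {φ} is LP-valid and {φ} ⇒ Δ is K3-valid. -/

import Mathlib

/-- λ-free propositional formulas: variables, ⊤, ⊥, ¬, ∨, ∧. -/
inductive Fm : Type
  | var : ℕ → Fm
  | top : Fm
  | bot : Fm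
  | neg : Fm → Fm
  | disj : Fm → Fm → Fm
  | conj : Fm → Fm → Fm
  deriving DecidableEq

/-- A function `v : Var → ℚ` is an SK-valuation if it takes values in {0, 1/2, 1}. -/
def SK (v : ℕ → ℚ) : Prop := ∀ p : ℕ, v p = 0 ∨ v p = 1/2 ∨ v p = 1

/-- Extension of a valuation to all λ-free formulas by the Strong Kleene scheme. -/
def eval (v : ℕ → ℚ) : Fm → ℚ
  | .var p => v p
  | .top => 1
  | .bot => 0
  | .neg φ => 1 - eval v φ
  | .disj φ ψ => max (eval v φ) (eval v ψ)
  | .conj φ ψ => min (eval v φ) (eval v ψ)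

abbrev Inference := Finset Fm × Finset Fm

def K3Valid (Γ Δ : Finset Fm) : Prop :=
  ∀ v : ℕ → ℚ, SK v → (∀ γ ∈ Γ, eval v γ = 1) → ∃ δ ∈ Δ, eval v δ = 1

def LPValid (Γ Δ : Finset Fm) : Prop :=
  ∀ v : ℕ → ℚ, SK v → (∀ γ ∈ Γ, eval v γ ≠ 0) → ∃ δ ∈ Δ, eval v δ ≠ 0

def STValid (Γ Δ : Finset Fm) : Prop :=
  ∀ v : ℕ → ℚ, SK v → (∀ γ ∈ Γ, eval v γ = 1) → ∃ δ ∈ Δ, eval v δ ≠ 0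

def K3plus : Set Inference := {I | K3Valid I.1 I.2}
def LPplus : Set Inference := {I | LPValid I.1 I.2}
def STplus : Set Inference := {I | STValid I.1 I.2}

/-- Relative product: the middle term is a single formula. -/
def RelProd (R S : Set Inference) : Set Inference :=
  {I | ∃ φ : Fm, (I.1, ({φ} : Finset Fm)) ∈ R ∧ (({φ} : Finset Fm), I.2) ∈ S}

/-! ### Auxiliary lemmas -/

lemma eval_range {v : ℕ → ℚ} (hv : SK v) :
    ∀ ψ : Fm, eval v ψ = 0 ∨ eval v ψ = 1/2 ∨ eval v ψ = 1 := by
  intro ψ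
  induction ψ with
  | var p => exact hv p
  | top => simp [eval]
  | bot => simp [eval]
  | neg φ ih => rcases ih with h|h|h <;> simp [eval, h] <;> norm_num
  | disj φ ψ ih1 ih2 =>
      rcases ih1 with h1|h1|h1 <;> rcases ih2 with h2|h2|h2 <;>
        simp [eval, h1, h2] <;> norm_num [max_def]
  | conj φ ψ ih1 ih2 =>
      rcases ih1 with h1|h1|h1 <;> rcases ih2 with h2|h2|h2 <;>
        simp [eval, h1, h2] <;> norm_num [min_def]

lemma eval_nonneg {v : ℕ → ℚ} (hv : SK v) (ψ : Fm) : 0 ≤ eval v ψ := by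
  rcases eval_range hv ψ with h|h|h <;> rw [h] <;> norm_num

lemma eval_le_one {v : ℕ → ℚ} (hv : SK v) (ψ : Fm) : eval v ψ ≤ 1 := by
  rcases eval_range hv ψ with h|h|h <;> rw [h] <;> norm_num

lemma eval_classical {v : ℕ → ℚ} (hv : SK v) (hc : ∀ p, v p ≠ 1/2) :
    ∀ ψ : Fm, eval v ψ = 0 ∨ eval v ψ = 1 := by
  intro ψ
  induction ψ with
  | var p => rcases hv p with h|h|h; exacts [Or.inl h, absurd h (hc p), Or.inr h]
  | top => simp [eval]
  | bot => simp [eval]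
  | neg φ ih => rcases ih with h|h <;> simp [eval, h]
  | disj φ ψ ih1 ih2 =>
      rcases ih1 with h1|h1 <;> rcases ih2 with h2|h2 <;>
        simp [eval, h1, h2] <;> norm_num [max_def]
  | conj φ ψ ih1 ih2 =>
      rcases ih1 with h1|h1 <;> rcases ih2 with h2|h2 <;>
        simp [eval, h1, h2] <;> norm_num [min_def]

lemma eval_sharpen {v w : ℕ → ℚ} (hv : SK v) (hw : SK w)
    (h0 : ∀ p, v p = 0 → w p = 0) (h1 : ∀ p, v p = 1 → w p = 1) :
    ∀ ψ : Fm, (eval v ψ = 1 → eval w ψ = 1) ∧ (eval v ψ = 0 → eval w ψ = 0) := by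
  intro ψ
  induction ψ with
  | var p => exact ⟨h1 p, h0 p⟩
  | top => simp [eval]
  | bot => simp [eval]
  | neg φ ih =>
      constructor
      · intro h; have : eval v φ = 0 := by simp [eval] at h; linarith
        have := ih.2 this; simp [eval, this]
      · intro h; have : eval v φ = 1 := by simp [eval] at h; linarith
        have := ih.1 this; simp [eval, this]
  | disj φ ψ ih1 ih2 =>
      constructor
      · intro h
        simp only [eval] at h ⊢
        rcases max_choice (eval v φ) (eval v ψ) with hm|hm <;> rw [hm] at h
        · have := ih1.1 h
          exact le_antisymm (max_le (eval_le_one hw φ) (eval_le_one hw ψ))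
            (this ▸ le_max_left _ _)
        · have := ih2.1 h
          exact le_antisymm (max_le (eval_le_one hw φ) (eval_le_one hw ψ))
            (this ▸ le_max_right _ _)
      · intro h
        simp only [eval] at h ⊢
        have hφ : eval v φ = 0 :=
          le_antisymm (h ▸ le_max_left _ _) (eval_nonneg hv φ)
        have hψ : eval v ψ = 0 :=
          le_antisymm (h ▸ le_max_right _ _) (eval_nonneg hv ψ)
        rw [ih1.2 hφ, ih2.2 hψ]; simp
  | conj φ ψ ih1 ih2 =>
      constructor
      · intro h
        simp only [eval] at h ⊢
        have hφ : eval v φ = 1 :=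
          le_antisymm (eval_le_one hv φ) (h ▸ min_le_left _ _)
        have hψ : eval v ψ = 1 :=
          le_antisymm (eval_le_one hv ψ) (h ▸ min_le_right _ _)
        rw [ih1.1 hφ, ih2.1 hψ]; simp
      · intro h
        simp only [eval] at h ⊢
        rcases min_choice (eval v φ) (eval v ψ) with hm|hm <;> rw [hm] at h
        · have := ih1.2 h
          exact le_antisymm (this ▸ min_le_left _ _)
            (le_min (eval_nonneg hw φ) (eval_nonneg hw ψ))
        · have := ih2.2 h
          exact le_antisymm (this ▸ min_le_right _ _)
            (le_min (eval_nonneg hw φ) (eval_nonneg hw ψ))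

def Fm.vars : Fm → Finset ℕ
  | .var p => {p}
  | .top => ∅
  | .bot => ∅
  | .neg φ => φ.vars
  | .disj φ ψ => φ.vars ∪ ψ.vars
  | .conj φ ψ => φ.vars ∪ ψ.vars

lemma eval_congr {u v : ℕ → ℚ} : ∀ {ψ : Fm}, (∀ p ∈ ψ.vars, u p = v p) →
    eval u ψ = eval v ψ := by
  intro ψ
  induction ψ with
  | var p => intro h; exact h p (by simp [Fm.vars])
  | top => intro _; rfl
  | bot => intro _; rfl
  | neg φ ih => intro h; simp only [eval]; rw [ih h]
  | disj φ ψ ih1 ih2 =>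
      intro h; simp only [eval]
      rw [ih1 fun p hp => h p (by simp [Fm.vars, hp]),
          ih2 fun p hp => h p (by simp [Fm.vars, hp])]
  | conj φ ψ ih1 ih2 =>
      intro h; simp only [eval]
      rw [ih1 fun p hp => h p (by simp [Fm.vars, hp]),
          ih2 fun p hp => h p (by simp [Fm.vars, hp])]

def bigDisj : List Fm → Fm
  | [] => .bot
  | a :: t => .disj a (bigDisj t)

def bigConj : List Fm → Fm
  | [] => .top
  | a :: t => .conj a (bigConj t)

lemma bigDisj_eq_one {v : ℕ → ℚ} :
    ∀ {l : List Fm}, eval v (bigDisj l) = 1 → ∃ ψ ∈ l, eval v ψ = 1 := by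
  intro l
  induction l with
  | nil => intro h; simp [bigDisj, eval] at h
  | cons a t ih =>
      intro h
      simp only [bigDisj, eval] at h
      rcases max_choice (eval v a) (eval v (bigDisj t)) with hm|hm <;> rw [hm] at h
      · exact ⟨a, by simp, h⟩
      · obtain ⟨ψ, hψ, h1⟩ := ih h
        exact ⟨ψ, by simp [hψ], h1⟩

lemma bigDisj_pos {v : ℕ → ℚ} :
    ∀ {l : List Fm}, (∃ ψ ∈ l, 0 < eval v ψ) → 0 < eval v (bigDisj l) := by
  intro l
  induction l with
  | nil => rintro ⟨ψ, h, _⟩; simp at h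
  | cons a t ih =>
      rintro ⟨ψ, hψ, hpos⟩
      simp only [bigDisj, eval, lt_max_iff]
      rcases List.mem_cons.mp hψ with rfl|hmem
      · exact Or.inl hpos
      · exact Or.inr (ih ⟨ψ, hmem, hpos⟩)

lemma bigConj_eq_one {v : ℕ → ℚ} (hv : SK v) :
    ∀ {l : List Fm}, eval v (bigConj l) = 1 → ∀ ψ ∈ l, eval v ψ = 1 := by
  intro l
  induction l with
  | nil => intro _ ψ h; simp at h
  | cons a t ih =>
      intro h ψ hψ
      simp only [bigConj, eval] at h
      have ha : eval v a = 1 :=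
        le_antisymm (eval_le_one hv a) (h ▸ min_le_left _ _)
      have ht : eval v (bigConj t) = 1 :=
        le_antisymm (eval_le_one hv _) (h ▸ min_le_right _ _)
      rcases List.mem_cons.mp hψ with rfl|hmem
      · exact ha
      · exact ih ht ψ hmem

lemma bigConj_pos {v : ℕ → ℚ} :
    ∀ {l : List Fm}, (∀ ψ ∈ l, 0 < eval v ψ) → 0 < eval v (bigConj l) := by
  intro l
  induction l with
  | nil => intro _; simp [bigConj, eval]
  | cons a t ih =>
      intro h
      simp only [bigConj, eval, lt_min_iff]
      exact ⟨h a (by simp), ih fun ψ hψ => h ψ (by simp [hψ])⟩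

def val3 (i : Fin 3) : ℚ := if i = 0 then 0 else if i = 1 then 1/2 else 1
def toFin3 (q : ℚ) : Fin 3 := if q = 0 then 0 else if q = 1/2 then 1 else 2

lemma val3_toFin3 {v : ℕ → ℚ} (hv : SK v) (p : ℕ) : val3 (toFin3 (v p)) = v p := by
  rcases hv p with h|h|h <;> simp [toFin3, h, val3] <;> norm_num

lemma val3_cases (i : Fin 3) : val3 i = 0 ∨ val3 i = 1/2 ∨ val3 i = 1 := by
  fin_cases i <;> simp [val3]

lemma val3_ne_half {i : Fin 3} (h : i ≠ 1) : val3 i ≠ 1/2 := by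
  fin_cases i <;> simp [val3] at h ⊢ <;> norm_num

def liftV (V : Finset ℕ) (f : {x // x ∈ V} → Fin 3) : ℕ → ℚ :=
  fun p => if h : p ∈ V then val3 (f ⟨p, h⟩) else 1

lemma SK_liftV (V : Finset ℕ) (f : {x // x ∈ V} → Fin 3) : SK (liftV V f) := by
  intro p
  unfold liftV
  split
  · exact val3_cases _
  · right; right; rfl

def lit (p : ℕ) (i : Fin 3) : Fm :=
  if i = 0 then .neg (.var p) else if i = 1 then .conj (.var p) (.neg (.var p)) else .var p

noncomputable def chi (V : Finset ℕ) (f : {x // x ∈ V} → Fin 3) : Fm :=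
  bigConj (V.attach.toList.map fun p => lit p.1 (f p))

theorem ST_eq_relProd_LP_K3_lambdaFree : STplus = RelProd LPplus K3plus := by
  ext I
  obtain ⟨Γ, Δ⟩ := I
  simp only [STplus, RelProd, LPplus, K3plus, Set.mem_setOf_eq]
  constructor
  · -- hard direction : construct the interpolant
    intro hST
    classical
    set V : Finset ℕ := Γ.sup Fm.vars ∪ Δ.sup Fm.vars with hVdef
    have hΓsub : ∀ γ ∈ Γ, γ.vars ⊆ V := fun γ hγ =>
      le_trans (Finset.le_sup hγ) Finset.subset_union_left
    have hΔsub : ∀ δ ∈ Δ, δ.vars ⊆ V := fun δ hδ =>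
      le_trans (Finset.le_sup hδ) Finset.subset_union_right
    set S : Finset ({x // x ∈ V} → Fin 3) :=
      Finset.univ.filter (fun f => ∀ γ ∈ Γ, eval (liftV V f) γ ≠ 0) with hSdef
    refine ⟨bigDisj (S.toList.map (chi V)), ?_, ?_⟩
    · -- LP-validity of Γ ⇒ φ
      intro v hv hΓ
      refine ⟨_, Finset.mem_singleton_self _, ?_⟩
      set f : {x // x ∈ V} → Fin 3 := fun p => toFin3 (v p.1) with hfdef
      have hagree : ∀ p ∈ V, liftV V f p = v p := by
        intro p hp
        simp only [liftV, dif_pos hp, hfdef]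
        exact val3_toFin3 hv p
      have hfS : f ∈ S := by
        rw [hSdef, Finset.mem_filter]
        refine ⟨Finset.mem_univ _, fun γ hγ => ?_⟩
        rw [eval_congr fun p hp => hagree p (hΓsub γ hγ hp)]
        exact hΓ γ hγ
      have hchipos : 0 < eval v (chi V f) := by
        apply bigConj_pos
        intro ψ hψ
        obtain ⟨p, _, rfl⟩ := List.mem_map.mp hψ
        rcases hv p.1 with h|h|h <;>
          simp [hfdef, lit, toFin3, h, eval] <;> norm_num
      have : 0 < eval v (bigDisj (S.toList.map (chi V))) := by
        apply bigDisj_pos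
        exact ⟨chi V f, List.mem_map.mpr ⟨f, Finset.mem_toList.mpr hfS, rfl⟩, hchipos⟩
      exact this.ne'
    · -- K3-validity of φ ⇒ Δ
      intro v hv h1
      have hφ : eval v (bigDisj (S.toList.map (chi V))) = 1 :=
        h1 _ (Finset.mem_singleton_self _)
      obtain ⟨ψ, hψmem, hψ1⟩ := bigDisj_eq_one hφ
      obtain ⟨f, hfl, rfl⟩ := List.mem_map.mp hψmem
      have hfS : f ∈ S := Finset.mem_toList.mp hfl
      have hlits : ∀ p : {x // x ∈ V}, eval v (lit p.1 (f p)) = 1 := by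
        intro p
        exact bigConj_eq_one hv hψ1 _
          (List.mem_map.mpr ⟨p, Finset.mem_toList.mpr (Finset.mem_attach _ _), rfl⟩)
      have key : ∀ p : {x // x ∈ V}, v p.1 = val3 (f p) ∧ f p ≠ 1 := by
        intro p
        have hl := hlits p
        by_cases h0 : f p = 0
        · simp only [lit, h0, if_pos rfl, if_true, eval] at hl
          refine ⟨by simp [val3, h0]; linarith, by rw [h0]; decide⟩
        · by_cases h1' : f p = 1
          · exfalso
            simp only [lit, h0, if_neg h0, h1', if_pos rfl, if_true, if_neg (show (1 : Fin 3) ≠ 0 by decide), eval] at hl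
            have ha := min_le_left (v p.1) (1 - v p.1)
            have hb := min_le_right (v p.1) (1 - v p.1)
            rw [hl] at ha hb
            linarith
          · simp only [lit, if_neg h0, if_neg h1', eval] at hl
            exact ⟨by rw [hl]; simp [val3, h0, h1'], h1'⟩
      have hagree : ∀ p ∈ V, v p = liftV V f p := by
        intro p hp
        simp only [liftV, dif_pos hp]
        exact (key ⟨p, hp⟩).1
      have hw : SK (liftV V f) := SK_liftV V f
      have hclass : ∀ p, liftV V f p ≠ 1/2 := by
        intro p
        unfold liftV
        split
        · exact val3_ne_half (key ⟨p, by assumption⟩).2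
        · norm_num
      have hwΓ : ∀ γ ∈ Γ, eval (liftV V f) γ = 1 := by
        intro γ hγ
        have hne : eval (liftV V f) γ ≠ 0 := by
          rw [hSdef, Finset.mem_filter] at hfS
          exact hfS.2 γ hγ
        rcases eval_classical hw hclass γ with h|h
        · exact absurd h hne
        · exact h
      obtain ⟨δ, hδΔ, hδne⟩ := hST (liftV V f) hw hwΓ
      have hδ1 : eval (liftV V f) δ = 1 := by
        rcases eval_classical hw hclass δ with h|h
        · exact absurd h hδne
        · exact h
      refine ⟨δ, hδΔ, ?_⟩
      rw [eval_congr fun p hp => hagree p (hΔsub δ hδΔ hp)]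
      exact hδ1
  · -- easy direction : composition
    rintro ⟨φ, hLP, hK3⟩ v hv hΓ
    set w : ℕ → ℚ := fun p => if v p = 1/2 then 1 else v p with hwdef
    have hw : SK w := by
      intro p
      rcases hv p with h|h|h
      · left; norm_num [hwdef, h]
      · right; right; norm_num [hwdef, h]
      · right; right; norm_num [hwdef, h]
    have sharp := eval_sharpen hv hw
      (fun p hp => by simp [hwdef, hp])
      (fun p hp => by simp [hwdef, hp])
    have hclass : ∀ p, w p ≠ 1/2 := by
      intro p
      rcases hv p with h|h|h <;> norm_num [hwdef, h]
    have hwΓ : ∀ γ ∈ Γ, eval w γ = 1 := fun γ hγ => (sharp γ).1 (hΓ γ hγ)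
    obtain ⟨δ', hδ', hφne⟩ := hLP w hw (fun γ hγ => by rw [hwΓ γ hγ]; norm_num)
    rw [Finset.mem_singleton] at hδ'
    subst hδ'
    have hφ1 : eval w δ' = 1 := by
      rcases eval_classical hw hclass δ' with h|h
      · exact absurd h hφne
      · exact h
    obtain ⟨δ, hδΔ, hδ1⟩ := hK3 w hw (fun ψ hψ => by
      rw [Finset.mem_singleton] at hψ; rw [hψ]; exact hφ1)
    refine ⟨δ, hδΔ, fun hc => ?_⟩
    have := (sharp δ).2 hc
    rw [hδ1] at this
    norm_num at this
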